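/- For every probability measure ν on {-1,0,1}, every β ∈ ℝ, every a priori measure α on {-1,0,1} with α(s) > 0 for all s, and every sequence of configurations ω^{(N)} ∈ {-1,0,1}^N whose empirical distributions (1/(N−1)) Σ_{i=2}^N δ_{ω^{(N)}_i} converge to ν as N → ∞, the single-site conditional probabilities of the mean-field soft-core Widom-Rowlinson model converge: for each σ ∈ {-1,0,1}, lim_{N→∞} μ_{N,β,α}(ω_1 = σ | ω_{[2,N]} = ω^{(N)}_{[2,N]}) = γ(σ|ν), where γ(σ|ν) = α(σ) e^{−β(1[σ=1] ν(−1) + 1[σ=−1] ν(1))} / Σ_{σ'∈{-1,0,1}} α(σ') e^{−β(1[σ'=1] ν(−1) + 1[σ'=−1] ν(1))}. In particular the mean-field soft-core Widom-Rowlinson model is sequentially Gibbs. -/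
import Mathlib


open Real Filter Finset Topology

/-- The local state space `{-1, 0, 1}` of the Widom-Rowlinson model. -/
abbrev Spin : Finset ℤ := {-1, 0, 1}

/-- A probability vector on `{-1, 0, 1}`, encoded as a function `ℤ → ℝ`
supported on `{-1, 0, 1}`. -/
def IsProbVec (ν : ℤ → ℝ) : Prop :=
  (∀ s, 0 ≤ ν s) ∧ (∀ s, s ∉ Spin → ν s = 0) ∧ ∑ s ∈ Spin, ν s = 1

/-- The (unnormalized) Boltzmann weight of the mean-field soft-core Widom-Rowlinson
model with repulsion parameter `β` and a priori measure `α`, at system size `N`. -/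
noncomputable def wrWeight (β : ℝ) (α : ℤ → ℝ) {N : ℕ} (ω : Fin N → Spin) : ℝ :=
  Real.exp (-(β / (2 * (N : ℝ))) * ∑ i : Fin N, ∑ j : Fin N,
      (if ((ω i : ℤ) * (ω j : ℤ) = -1) then (1 : ℝ) else 0))
    * ∏ j : Fin N, α (ω j : ℤ)

/-- The single-site conditional probability `μ_{N+1,β,α}(ω_1 = σ | rest = τ)` of the
mean-field soft-core Widom-Rowlinson model (system size `N + 1`, conditioning on the
`N` remaining spins `τ`). -/
noncomputable def wrCondProb (β : ℝ) (α : ℤ → ℝ) {N : ℕ} (σ : Spin)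
    (τ : Fin N → Spin) : ℝ :=
  wrWeight β α (Fin.cons σ τ) / ∑ σ' : Spin, wrWeight β α (Fin.cons σ' τ)

/-- The empirical distributions of the boundary conditions `τ N` converge to `ν`. -/
def EmpConv (τ : (N : ℕ) → Fin N → Spin) (ν : ℤ → ℝ) : Prop :=
  ∀ s : ℤ, Tendsto
    (fun N : ℕ => ((univ.filter (fun i : Fin N => (τ N i : ℤ) = s)).card : ℝ) / N)
    atTop (𝓝 (ν s))

/-- The limiting single-site kernel `γ(σ | ν)` of the mean-field soft-core
Widom-Rowlinson model. -/
noncomputable def wrLimitKernel (β : ℝ) (α : ℤ → ℝ) (ν : ℤ → ℝ) (σ : ℤ) : ℝ :=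
  α σ * Real.exp (-β * ((if σ = 1 then ν (-1) else 0) + (if σ = -1 then ν 1 else 0))) /
    ∑ σ' ∈ Spin,
      α σ' * Real.exp (-β * ((if σ' = 1 then ν (-1) else 0) + (if σ' = -1 then ν 1 else 0)))

/-- limiting exponent -/
noncomputable def mlim (ν : ℤ → ℝ) (s : ℤ) : ℝ :=
  (if s = 1 then ν (-1) else 0) + (if s = -1 then ν 1 else 0)

/-- the reduced single-site numerator -/
noncomputable def gfun (β : ℝ) (α : ℤ → ℝ) {N : ℕ} (t : Fin N → Spin) (x : Spin) : ℝ :=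
  α (x : ℤ) * Real.exp (-β *
    ((∑ j : Fin N, if ((x : ℤ) * (t j : ℤ) = -1) then (1 : ℝ) else 0) / ((N : ℝ) + 1)))

lemma weight_cons (β : ℝ) (α : ℤ → ℝ) {N : ℕ} (σ : Spin) (t : Fin N → Spin) :
    wrWeight β α (Fin.cons σ t) =
      (Real.exp (-(β / (2 * ((N : ℝ) + 1))) * ∑ i : Fin N, ∑ j : Fin N,
          (if ((t i : ℤ) * (t j : ℤ) = -1) then (1 : ℝ) else 0))
        * ∏ j : Fin N, α (t j : ℤ)) * gfun β α t σ := by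
  unfold wrWeight gfun
  have hσσ : ¬ ((σ : ℤ) * (σ : ℤ) = -1) := by
    intro h; nlinarith [mul_self_nonneg ((σ : ℤ))]
  set c : ℝ := ∑ j : Fin N, if ((σ : ℤ) * (t j : ℤ) = -1) then (1 : ℝ) else 0 with hc
  set S : ℝ := ∑ i : Fin N, ∑ j : Fin N,
      if ((t i : ℤ) * (t j : ℤ) = -1) then (1 : ℝ) else 0 with hS
  set ω : Fin (N + 1) → Spin := Fin.cons σ t with hω
  have hA : (∑ i : Fin (N + 1), ∑ j : Fin (N + 1),
      (if ((ω i : ℤ) * (ω j : ℤ) = -1) then (1 : ℝ) else 0))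
      = c + (c + S) := by
    simp only [Fin.sum_univ_succ, hω, Fin.cons_zero, Fin.cons_succ, if_neg hσσ, zero_add,
      Finset.sum_add_distrib]
    have hcomm : (∑ i : Fin N, if ((t i : ℤ) * (σ : ℤ) = -1) then (1 : ℝ) else 0) = c := by
      rw [hc]; exact Finset.sum_congr rfl fun i _ => by rw [mul_comm]
    rw [hcomm]
  rw [hA, Fin.prod_univ_succ]
  simp only [hω, Fin.cons_zero, Fin.cons_succ]
  push_cast
  have h1 : ((N : ℝ) + 1) ≠ 0 := by positivity
  have hxp : -(β / (2 * ((N : ℝ) + 1))) * (c + (c + S))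
      = (-(β / (2 * ((N : ℝ) + 1))) * S) + (-β * (c / ((N : ℝ) + 1))) := by
    field_simp; ring
  rw [hxp, Real.exp_add]; ring

lemma cond_eq (β : ℝ) (α : ℤ → ℝ) (hpos : ∀ s ∈ Spin, 0 < α s) {N : ℕ}
    (σ : Spin) (t : Fin N → Spin) :
    wrCondProb β α σ t = gfun β α t σ / ∑ σ' : Spin, gfun β α t σ' := by
  unfold wrCondProb
  have hK : 0 < Real.exp (-(β / (2 * ((N : ℝ) + 1))) * ∑ i : Fin N, ∑ j : Fin N,
      (if ((t i : ℤ) * (t j : ℤ) = -1) then (1 : ℝ) else 0)) * ∏ j : Fin N, α (t j : ℤ) :=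
    mul_pos (Real.exp_pos _) (Finset.prod_pos fun j _ => hpos _ (t j).2)
  simp_rw [weight_cons β α _ t, ← Finset.mul_sum]
  rw [mul_div_mul_left _ _ (ne_of_gt hK)]

lemma div_succ_tendsto {a : ℕ → ℝ} {L : ℝ}
    (h : Tendsto (fun N : ℕ => a N / N) atTop (𝓝 L)) :
    Tendsto (fun N : ℕ => a N / ((N : ℝ) + 1)) atTop (𝓝 L) := by
  have h2 := h.mul (tendsto_natCast_div_add_atTop (1 : ℝ))
  rw [mul_one] at h2
  refine h2.congr' ?_
  filter_upwards [eventually_ge_atTop 1] with N hN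
  have hN0 : (N : ℝ) ≠ 0 := Nat.cast_ne_zero.mpr (by omega)
  field_simp

lemma gconv (β : ℝ) (α ν : ℤ → ℝ) (τ : (N : ℕ) → Fin N → Spin) (hτ : EmpConv τ ν)
    (x : Spin) :
    Tendsto (fun N : ℕ => gfun β α (τ N) x) atTop
      (𝓝 (α (x : ℤ) * Real.exp (-β * mlim ν (x : ℤ)))) := by
  have hx : (x : ℤ) = -1 ∨ (x : ℤ) = 0 ∨ (x : ℤ) = 1 := by
    have h2 := x.2
    simp only [Spin, Finset.mem_insert, Finset.mem_singleton] at h2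
    tauto
  have key : Tendsto (fun N : ℕ =>
      (∑ j : Fin N, if ((x : ℤ) * (τ N j : ℤ) = -1) then (1 : ℝ) else 0) / ((N : ℝ) + 1))
      atTop (𝓝 (mlim ν (x : ℤ))) := by
    rcases hx with hx | hx | hx
    · have hm : mlim ν (x : ℤ) = ν 1 := by rw [hx]; simp [mlim]
      rw [hm]
      refine (div_succ_tendsto (hτ 1)).congr fun N => ?_
      congr 1
      have hiff : ∀ j : Fin N, ((x : ℤ) * (τ N j : ℤ) = -1) ↔ ((τ N j : ℤ) = 1) := by
        intro j; rw [hx]; constructor <;> intro h <;> linarith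
      simp only [hiff]
      simp [Finset.sum_boole]
    · have hm : mlim ν (x : ℤ) = 0 := by rw [hx]; simp [mlim]
      rw [hm]
      refine tendsto_const_nhds.congr fun N => ?_
      simp [hx]
    · have hm : mlim ν (x : ℤ) = ν (-1) := by rw [hx]; simp [mlim]
      rw [hm]
      refine (div_succ_tendsto (hτ (-1))).congr fun N => ?_
      congr 1
      have hiff : ∀ j : Fin N, ((x : ℤ) * (τ N j : ℤ) = -1) ↔ ((τ N j : ℤ) = -1) := by
        intro j; rw [hx]; constructor <;> intro h <;> linarith
      simp only [hiff]
      simp [Finset.sum_boole]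
  have h := ((Real.continuous_exp.tendsto (-β * mlim ν (x : ℤ))).comp
    (key.const_mul (-β))).const_mul (α (x : ℤ))
  simpa only [gfun, Function.comp] using h

/-- The mean-field soft-core Widom-Rowlinson model is sequentially Gibbs: along any
sequence of boundary conditions whose empirical distributions converge to `ν`, the
single-site conditional probabilities converge to the explicit kernel `γ(σ | ν)`. -/
theorem wr_sequentially_Gibbs (β : ℝ) (α : ℤ → ℝ) (hα : IsProbVec α)
    (hpos : ∀ s ∈ Spin, 0 < α s) (ν : ℤ → ℝ) (hν : IsProbVec ν)
    (τ : (N : ℕ) → Fin N → Spin) (hτ : EmpConv τ ν) (σ : Spin) :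
    Tendsto (fun N : ℕ => wrCondProb β α σ (τ N)) atTop
      (𝓝 (wrLimitKernel β α ν (σ : ℤ))) := by
  have hnum := gconv β α ν τ hτ σ
  have hden : Tendsto (fun N : ℕ => ∑ σ' : Spin, gfun β α (τ N) σ') atTop
      (𝓝 (∑ σ' : Spin, α (σ' : ℤ) * Real.exp (-β * mlim ν (σ' : ℤ)))) :=
    tendsto_finset_sum _ fun σ' _ => gconv β α ν τ hτ σ'
  have hD : 0 < ∑ σ' : Spin, α (σ' : ℤ) * Real.exp (-β * mlim ν (σ' : ℤ)) := by
    refine Finset.sum_pos (fun i _ => mul_pos (hpos _ i.2) (Real.exp_pos _)) ?_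
    exact ⟨⟨0, by decide⟩, Finset.mem_univ _⟩
  have h := hnum.div hden (ne_of_gt hD)
  have heq : (fun N : ℕ => wrCondProb β α σ (τ N))
      = fun N : ℕ => gfun β α (τ N) σ / ∑ σ' : Spin, gfun β α (τ N) σ' :=
    funext fun N => cond_eq β α hpos σ (τ N)
  have hker : wrLimitKernel β α ν (σ : ℤ) = (α (σ : ℤ) * Real.exp (-β * mlim ν (σ : ℤ))) /
      ∑ σ' : Spin, α (σ' : ℤ) * Real.exp (-β * mlim ν (σ' : ℤ)) := by
    unfold wrLimitKernel mlim
    rw [Finset.sum_coe_sort Spin (fun z => α z * Real.exp (-β *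
      ((if z = 1 then ν (-1) else 0) + (if z = -1 then ν 1 else 0))))]
  rw [heq, hker]
  exact h
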